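/- arXiv:1906.10674 — 2 statements merged into one kernel-verified Lean document; each statement's English description precedes it below -/
import Mathlib

section
/- Let P ∈ ℂ⟨X_1,…,X_k⟩ and let L_P ∈ M_m(ℂ⟨X_1,…,X_k⟩) be a linearization of P. Let e_{11} be the m×m matrix unit with a single nonzero entry equal to 1 in position (1,1). Let y = (y_1,…,y_k) be a k-tuple of elements of a unital C*-algebra 𝒜. Then, for any z ∈ ℂ, z·e_{11}⊗1_𝒜 − L_P(y) is invertible in M_m(𝒜) if and only if z·1_𝒜 − P(y) is invertible in 𝒜, and in that case the (1,1)-entry of (z·e_{11}⊗1_𝒜 − L_P(y))^{-1} equals (z·1_𝒜 − P(y))^{-1}. -/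
open scoped BigOperators Kronecker
open MeasureTheory ProbabilityTheory Filter Matrix
open scoped ComplexOrder

noncomputable section

namespace NCOutliers

/-! ### Matrix analysis basics -/

/-- The operator norm of a square complex matrix (acting on Euclidean space). -/
def matOpNorm {ι : Type*} [Fintype ι] [DecidableEq ι] (B : Matrix ι ι ℂ) : ℝ :=
  ‖Matrix.toEuclideanCLM (𝕜 := ℂ) B‖

/-- The smallest singular value of a square complex matrix. -/
def smallestSV {ι : Type*} [Fintype ι] [DecidableEq ι] (B : Matrix ι ι ℂ) : ℝ :=
  sInf ((fun v : EuclideanSpace ℂ ι => ‖Matrix.toEuclideanCLM (𝕜 := ℂ) B v‖) '' {v | ‖v‖ = 1})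

open Classical in
/-- The multiset of eigenvalues (with algebraic multiplicity) of `B` lying in `Γ`. -/
def eigsIn {N : ℕ} (B : Matrix (Fin N) (Fin N) ℂ) (Γ : Set ℂ) : Multiset ℂ :=
  B.charpoly.roots.filter fun z => z ∈ Γ

/-- The number of eigenvalues (with algebraic multiplicity) of `B` lying in `Γ`. -/
def eigCount {N : ℕ} (B : Matrix (Fin N) (Fin N) ℂ) (Γ : Set ℂ) : ℕ :=
  (eigsIn B Γ).card

/-! ### Noncommutative polynomials -/

/-- Evaluation of a noncommutative polynomial in `k` indeterminates. -/
def evalPoly {A : Type*} [Ring A] [Algebra ℂ A] {k : ℕ}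
    (p : FreeAlgebra ℂ (Fin k)) (y : Fin k → A) : A :=
  FreeAlgebra.lift ℂ y p

/-- Evaluation of a noncommutative `*`-polynomial: the last `k` indeterminates are
evaluated at the adjoints. -/
def evalStarPoly {A : Type*} [Ring A] [StarRing A] [Algebra ℂ A] {k : ℕ}
    (p : FreeAlgebra ℂ (Fin k ⊕ Fin k)) (y : Fin k → A) : A :=
  FreeAlgebra.lift ℂ (Sum.elim y fun i => star (y i)) p

/-- A noncommutative polynomial has degree at most one. -/
def DegLeOne {k : ℕ} (p : FreeAlgebra ℂ (Fin k)) : Prop :=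
  p ∈ Submodule.span ℂ ({1} ∪ Set.range (FreeAlgebra.ι ℂ) : Set (FreeAlgebra ℂ (Fin k)))

/-! ### States, freeness, semicircular and circular elements -/

section State
variable {A : Type*} [Ring A] [StarRing A] [Algebra ℂ A] [StarModule ℂ A]

/-- `φ` is a state: unital and positive. -/
def IsState (φ : A →ₗ[ℂ] ℂ) : Prop :=
  φ 1 = 1 ∧ ∀ a : A, 0 ≤ (φ (a * star a)).re ∧ (φ (a * star a)).im = 0

/-- `φ` is a trace. -/
def IsTracial (φ : A →ₗ[ℂ] ℂ) : Prop :=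
  ∀ a b : A, φ (a * b) = φ (b * a)

/-- `φ` is faithful. -/
def IsFaithful (φ : A →ₗ[ℂ] ℂ) : Prop :=
  ∀ a : A, a ≠ 0 → 0 < (φ (a * star a)).re

/-- Freeness of a family of subsets of `A` with respect to `φ`: any alternating product of
centred elements of the generated `*`-subalgebras is centred. -/
def FreeFamily {ι : Type*} (φ : A →ₗ[ℂ] ℂ) (S : ι → Set A) : Prop :=
  ∀ (k : ℕ) (idx : Fin (k+1) → ι) (x : Fin (k+1) → A),
    (∀ l, x l ∈ StarAlgebra.adjoin ℂ (S (idx l))) →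
    (∀ l : Fin k, idx l.castSucc ≠ idx l.succ) →
    (∀ l, φ (x l) = 0) →
    φ (List.ofFn x).prod = 0

/-- Moments of the standard semicircular distribution. -/
def scMoment (k : ℕ) : ℝ :=
  ∫ t in (-2:ℝ)..2, t ^ k * Real.sqrt (4 - t ^ 2) / (2 * Real.pi)

/-- A standard semicircular element. -/
def IsSemicircular (φ : A →ₗ[ℂ] ℂ) (x : A) : Prop :=
  star x = x ∧ ∀ k : ℕ, φ (x ^ k) = scMoment k

/-- A (standard) circular element. -/
def IsCircular (φ : A →ₗ[ℂ] ℂ) (c : A) : Prop :=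
  IsSemicircular φ ((Real.sqrt 2 : ℂ)⁻¹ • (c + star c)) ∧
  IsSemicircular φ (((Real.sqrt 2 : ℂ) * Complex.I)⁻¹ • (c - star c)) ∧
  FreeFamily φ (fun b : Bool =>
    if b then ({(Real.sqrt 2 : ℂ)⁻¹ • (c + star c)} : Set A)
    else {((Real.sqrt 2 : ℂ) * Complex.I)⁻¹ • (c - star c)})

/-- A free circular system. -/
def IsFreeCircularSystem {u : ℕ} (φ : A →ₗ[ℂ] ℂ) (c : Fin u → A) : Prop :=
  (∀ j, IsCircular φ (c j)) ∧
  FreeFamily φ (fun j : Fin u => ({c j, star (c j)} : Set A))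

/-- `c` is a free circular system which is `*`-free from the tuple `a`. -/
def CircSystemFreeFrom {u t : ℕ} (φ : A →ₗ[ℂ] ℂ) (c : Fin u → A) (a : Fin t → A) : Prop :=
  IsFreeCircularSystem φ c ∧
  FreeFamily φ (Sum.elim (fun j : Fin u => ({c j, star (c j)} : Set A))
    (fun _ : Unit => Set.range a))

/-- `ε` commutes with and is tensor-independent (w.r.t. `φ`) from the set `S`. -/
def TensorIndepFrom (φ : A →ₗ[ℂ] ℂ) (ε : A) (S : Set A) : Prop :=
  (∀ x ∈ S, Commute ε x) ∧
  ∀ (q₁ : Polynomial ℂ), ∀ q₂ ∈ StarAlgebra.adjoin ℂ S,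
    φ (Polynomial.aeval ε q₁ * q₂) = φ (Polynomial.aeval ε q₁) * φ q₂

/-- A selfadjoint `±1`-Bernoulli symmetry. -/
def IsBernoulli (φ : A →ₗ[ℂ] ℂ) (ε : A) : Prop :=
  star ε = ε ∧ ε * ε = 1 ∧ φ ε = 0

end State

/-- `x ≥ e·1` in the order of a `C*`-algebra: `x - e·1` is of the form `z* z`. -/
def geScalar {A : Type*} [Ring A] [StarRing A] [Algebra ℂ A] (e : ℝ) (x : A) : Prop :=
  ∃ z : A, x - algebraMap ℂ A (e : ℂ) = star z * z

/-! ### Random matrices -/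

section RM
variable {Ω : Type*} [MeasurableSpace Ω]

/-- The rescaled real and imaginary parts of the entries of the infinite arrays `X`. -/
def entryParts {u : ℕ} (X : Fin u → ℕ → ℕ → Ω → ℂ) :
    Fin u × ℕ × ℕ × Bool → Ω → ℝ :=
  fun p ω => Real.sqrt 2 *
    (if p.2.2.2 then (X p.1 p.2.1 p.2.2.1 ω).re else (X p.1 p.2.1 p.2.2.1 ω).im)

/-- Hypothesis (X1): `u` independent infinite arrays whose (rescaled) real and imaginary
parts are i.i.d. centred with variance one and finite fourth moment. -/
structure X1Hyp {u : ℕ} (μ : Measure Ω) (X : Fin u → ℕ → ℕ → Ω → ℂ) : Prop where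
  meas : ∀ p, Measurable (entryParts X p)
  indep : iIndepFun (entryParts X) μ
  ident : ∀ p q, p.1 = q.1 → IdentDistrib (entryParts X p) (entryParts X q) μ μ
  centered : ∀ p, ∫ ω, entryParts X p ω ∂μ = 0
  variance : ∀ p, ∫ ω, (entryParts X p ω) ^ 2 ∂μ = 1
  fourthMoment : ∀ p, Integrable (fun ω => (entryParts X p ω) ^ 4) μ

/-- The `N × N` corner of the infinite array `X · v`. -/
def XMat {u : ℕ} (X : Fin u → ℕ → ℕ → Ω → ℂ) (N : ℕ) (v : Fin u) (ω : Ω) :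
    Matrix (Fin N) (Fin N) ℂ :=
  Matrix.of fun i j => X v i.1 j.1 ω

/-- The normalized matrix `X_N^{(v)}/√N`. -/
def XMatScaled {u : ℕ} (X : Fin u → ℕ → ℕ → Ω → ℂ) (N : ℕ) (v : Fin u) (ω : Ω) :
    Matrix (Fin N) (Fin N) ℂ :=
  ((Real.sqrt N : ℂ))⁻¹ • XMat X N v ω

/-- The random matrix `M_N = P(X_N/√N, A_N)`. -/
def MMat {u t : ℕ} (P : FreeAlgebra ℂ (Fin (u + t)))
    (X : Fin u → ℕ → ℕ → Ω → ℂ)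
    (AA : (N : ℕ) → Fin t → Matrix (Fin N) (Fin N) ℂ) (N : ℕ) (ω : Ω) :
    Matrix (Fin N) (Fin N) ℂ :=
  evalPoly P (Fin.append (fun v => XMatScaled X N v ω) (AA N))

end RM

/-- The deterministic matrix `M_N⁽⁰⁾ = P(0,…,0, A_N)`. -/
def M0Mat {u t : ℕ} (P : FreeAlgebra ℂ (Fin (u + t)))
    (AA : (N : ℕ) → Fin t → Matrix (Fin N) (Fin N) ℂ) (N : ℕ) :
    Matrix (Fin N) (Fin N) ℂ :=
  evalPoly P (Fin.append (fun _ : Fin u => 0) (AA N))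

/-- Hypothesis (A1): uniformly bounded deterministic matrices converging in
`*`-distribution to the tuple `a`. -/
def A1Hyp {A : Type*} [Ring A] [StarRing A] [Algebra ℂ A] {t : ℕ}
    (AA : (N : ℕ) → Fin t → Matrix (Fin N) (Fin N) ℂ)
    (φ : A →ₗ[ℂ] ℂ) (a : Fin t → A) : Prop :=
  (∀ i : Fin t, ∃ C : ℝ, ∀ N, matOpNorm (AA N i) ≤ C) ∧
  ∀ p : FreeAlgebra ℂ (Fin t ⊕ Fin t),
    Tendsto (fun N : ℕ => (N : ℂ)⁻¹ * (evalStarPoly p (AA N)).trace)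
      atTop (nhds (φ (evalStarPoly p a)))

/-! ### Operator-valued objects -/

section OV
variable {A : Type*} [Ring A] [StarRing A] [Algebra ℂ A]
variable {ι : Type*} [Fintype ι] [DecidableEq ι]

/-- The elementary tensor `ζ ⊗ x ∈ M_ι(A)`. -/
def tensorMat (ζ : Matrix ι ι ℂ) (x : A) : Matrix ι ι A :=
  Matrix.of fun i j => ζ i j • x

/-- Embedding of scalar matrices in `M_ι(A)`. -/
def embedMat (b : Matrix ι ι ℂ) : Matrix ι ι A := b.map (algebraMap ℂ A)

/-- The conditional expectation `id ⊗ φ : M_ι(A) → M_ι(ℂ)`, as a linear map. -/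
def entryE (φ : A →ₗ[ℂ] ℂ) : Matrix ι ι A →ₗ[ℂ] Matrix ι ι ℂ where
  toFun M := Matrix.of fun i j => φ (M i j)
  map_add' M N := by ext i j; simp [Matrix.add_apply]
  map_smul' r M := by ext i j; simp [Matrix.smul_apply]

/-- The embedding `M_ι(ℂ) → M_ι(A)`, as a linear map. -/
def embedL : Matrix ι ι ℂ →ₗ[ℂ] Matrix ι ι A :=
  (Algebra.ofId ℂ A).mapMatrix.toLinearMap

/-- The linear map `b ↦ (id ⊗ φ)(r · (b ⊗ 1) · r)` on `M_ι(ℂ)`. -/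
def sandwich (φ : A →ₗ[ℂ] ℂ) (r : Matrix ι ι A) :
    Matrix ι ι ℂ →ₗ[ℂ] Matrix ι ι ℂ :=
  (entryE φ).comp (((LinearMap.mulLeft ℂ r).comp (LinearMap.mulRight ℂ r)).comp embedL)

/-- The `M_ι(ℂ)`-valued Cauchy transform `G_x(b) = (id ⊗ φ)[(x - b)⁻¹]`. -/
def cauchyG (φ : A →ₗ[ℂ] ℂ) (x : Matrix ι ι A) (b : Matrix ι ι ℂ) : Matrix ι ι ℂ :=
  entryE φ (Ring.inverse (x - embedMat b))

end OV

/-- Identification of `M_n(M_m(ℂ))` with `M_{n·m}(ℂ)`. -/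
def blockify {n m : ℕ} (M : Matrix (Fin n) (Fin n) (Matrix (Fin m) (Fin m) ℂ)) :
    Matrix (Fin n × Fin m) (Fin n × Fin m) ℂ :=
  Matrix.of fun p q => M p.1 q.1 p.2 q.2

/-- Complete positivity of a linear self-map of `M_m(ℂ)`. -/
def IsCompletelyPositive {m : ℕ}
    (η : Matrix (Fin m) (Fin m) ℂ →ₗ[ℂ] Matrix (Fin m) (Fin m) ℂ) : Prop :=
  ∀ (n : ℕ) (M : Matrix (Fin n) (Fin n) (Matrix (Fin m) (Fin m) ℂ)),
    (blockify M).PosSemidef → (blockify (M.map η)).PosSemidef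

/-- The matrix upper half-plane: imaginary part positive definite. -/
def MatUpper {m : ℕ} (b : Matrix (Fin m) (Fin m) ℂ) : Prop :=
  ((((2 : ℂ) * Complex.I)⁻¹) • (b - bᴴ)).PosDef

/-- `s` is a centred `M_m(ℂ)`-valued semicircular element of variance `η`, characterized by
its Cauchy transform satisfying `G_s(b) = (-b - η(G_s(b)))⁻¹` on the upper half-plane. -/
def IsMatSemicircular {m : ℕ} {A : Type*} [Ring A] [StarRing A] [Algebra ℂ A]
    (φ : A →ₗ[ℂ] ℂ) (η : Matrix (Fin m) (Fin m) ℂ →ₗ[ℂ] Matrix (Fin m) (Fin m) ℂ)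
    (s : Matrix (Fin m) (Fin m) A) : Prop :=
  IsSelfAdjoint s ∧ ∀ b : Matrix (Fin m) (Fin m) ℂ, MatUpper b →
    IsUnit (s - embedMat b) ∧ cauchyG φ s b = Ring.inverse (-b - η (cauchyG φ s b))

/-- Freeness with amalgamation over `M_m(ℂ)` of `s` and `y`, w.r.t. `E = id ⊗ φ`. -/
def FreeWithAmalg {m : ℕ} {A : Type*} [Ring A] [StarRing A] [Algebra ℂ A]
    (φ : A →ₗ[ℂ] ℂ) (s y : Matrix (Fin m) (Fin m) A) : Prop :=
  ∀ (k : ℕ) (idx : Fin (k+1) → Bool) (x : Fin (k+1) → Matrix (Fin m) (Fin m) A),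
    (∀ l, x l ∈ Algebra.adjoin ℂ
      (Set.range (embedMat : Matrix (Fin m) (Fin m) ℂ → Matrix (Fin m) (Fin m) A) ∪
        {if idx l then s else y})) →
    (∀ l : Fin k, idx l.castSucc ≠ idx l.succ) →
    (∀ l, entryE φ (x l) = 0) →
    entryE φ (List.ofFn x).prod = 0

/-! ### Linearizations -/

/-- `L` is a linearization of `P`, with `(1,1)`-corner `0`, entries of degree at most one,
lower-right corner `Q` invertible, and `P = -u* Q⁻¹ v`. -/
def IsLinearization {k n : ℕ} (P : FreeAlgebra ℂ (Fin k))
    (L : Matrix (Fin (n+1)) (Fin (n+1)) (FreeAlgebra ℂ (Fin k))) : Prop :=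
  L 0 0 = 0 ∧ (∀ i j, DegLeOne (L i j)) ∧
  ∃ Qi : Matrix (Fin n) (Fin n) (FreeAlgebra ℂ (Fin k)),
    L.submatrix Fin.succ Fin.succ * Qi = 1 ∧
    Qi * L.submatrix Fin.succ Fin.succ = 1 ∧
    P = -∑ i : Fin n, ∑ j : Fin n, L 0 i.succ * Qi i j * L j.succ 0

/-- The linear pencil `γ ⊗ 1 + Σ_v ζ_v ⊗ y_v + Σ_k β_k ⊗ y_{u+k}`, as a matrix of
noncommutative polynomials in `u + t` indeterminates. -/
def linFromCoeffs {u t n : ℕ} (γ : Matrix (Fin (n+1)) (Fin (n+1)) ℂ)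
    (ζ : Fin u → Matrix (Fin (n+1)) (Fin (n+1)) ℂ)
    (β : Fin t → Matrix (Fin (n+1)) (Fin (n+1)) ℂ) :
    Matrix (Fin (n+1)) (Fin (n+1)) (FreeAlgebra ℂ (Fin (u+t))) :=
  Matrix.of fun i j =>
    algebraMap ℂ _ (γ i j)
      + ∑ v : Fin u, ζ v i j • FreeAlgebra.ι ℂ (Fin.castAdd t v)
      + ∑ k : Fin t, β k i j • FreeAlgebra.ι ℂ (Fin.natAdd u k)

/-- The normalized trace state `tr_n ⊗ φ` on `M_n(A)`. -/
def trState {A : Type*} [Ring A] [Algebra ℂ A] (φ : A →ₗ[ℂ] ℂ) (n : ℕ) :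
    Matrix (Fin n) (Fin n) A →ₗ[ℂ] ℂ where
  toFun M := (n : ℂ)⁻¹ * ∑ i, φ (M i i)
  map_add' M N := by simp [Matrix.add_apply, Finset.sum_add_distrib, mul_add]
  map_smul' r M := by
    simp [Matrix.smul_apply, Finset.mul_sum, mul_assoc, mul_left_comm]


/-- The entrywise sum of norms of a matrix over a normed ring (dominates the `C*`-norm). -/
def matSumNorm {A : Type*} [NormedRing A] {ι : Type*} [Fintype ι] (M : Matrix ι ι A) : ℝ :=
  ∑ i, ∑ j, ‖M i j‖

/-- The matrix pencil `z (e₁₁ ⊗ I_N) - γ ⊗ I_N - Σ_k β_k ⊗ B_k`. -/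
def pencilMat {t n N : ℕ} (γ : Matrix (Fin (n+1)) (Fin (n+1)) ℂ)
    (β : Fin t → Matrix (Fin (n+1)) (Fin (n+1)) ℂ)
    (B : Fin t → Matrix (Fin N) (Fin N) ℂ) (z : ℂ) :
    Matrix (Fin (n+1) × Fin N) (Fin (n+1) × Fin N) ℂ :=
  z • (Matrix.single (0 : Fin (n+1)) 0 (1 : ℂ) ⊗ₖ (1 : Matrix (Fin N) (Fin N) ℂ))
    - γ ⊗ₖ (1 : Matrix (Fin N) (Fin N) ℂ) - ∑ k, β k ⊗ₖ B k

/-- The matrix `Σ_v ζ_v ⊗ B_v`. -/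
def yMatK {u n N : ℕ} (ζ : Fin u → Matrix (Fin (n+1)) (Fin (n+1)) ℂ)
    (B : Fin u → Matrix (Fin N) (Fin N) ℂ) :
    Matrix (Fin (n+1) × Fin N) (Fin (n+1) × Fin N) ℂ :=
  ∑ v, ζ v ⊗ₖ B v

/-!
Splitting off the first row and column, `z e₁₁ - L_P(y)` becomes a 2 × 2 block matrix whose
lower-right block `-Q(y)` is invertible, and whose Schur complement `z - u*(y) Q(y)⁻¹ v(y)` is
`z - P(y)`. Over any ring, a block matrix with invertible lower-right block is invertible iff its
Schur complement is: the factorization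
`[[A, B], [C, D]] = [[1, B D⁻¹], [0, 1]] [[A - B D⁻¹ C, 0], [0, D]] [[1, 0], [D⁻¹ C, 1]]`
gives one direction, and the upper-left block of an inverse is an inverse of the Schur complement,
which gives the other direction and the formula for the `(1,1)` entry.
-/

theorem map_ringInverse {R S F : Type*} [Semiring R] [Semiring S] [EquivLike F R S]
    [RingEquivClass F R S] (f : F) (x : R) : f (Ring.inverse x) = Ring.inverse (f x) := by
  by_cases h : IsUnit x
  · obtain ⟨u, rfl⟩ := h
    simpa using (Ring.inverse_unit (Units.map (f : R →* S) u)).symm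
  · rw [Ring.inverse_non_unit _ h, Ring.inverse_non_unit _ ((isUnit_map_iff f x).not.mpr h),
      map_zero]

section SchurComplement

-- Mathlib's Schur complement lemmas assume a commutative ring of entries.

variable {m n α : Type*} [Fintype m] [Fintype n] [DecidableEq m] [DecidableEq n] [Ring α]
  {A : Matrix m m α} {B : Matrix m n α} {C : Matrix n m α} {D : Matrix n n α}

theorem isUnit_fromBlocks_zero₂₁_of_isUnit (hA : IsUnit A) (hD : IsUnit D) :
    IsUnit (fromBlocks A B 0 D) := by
  have := hA.invertible
  have := hD.invertible
  refine ⟨⟨fromBlocks A B 0 D, fromBlocks (⅟A) (-(⅟A * B * ⅟D)) 0 (⅟D), ?_, ?_⟩, rfl⟩ <;>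
    simp [fromBlocks_multiply, ← Matrix.mul_assoc, Matrix.invOf_mul_cancel_right,
      ← fromBlocks_one]

theorem isUnit_fromBlocks_zero₁₂_of_isUnit (hA : IsUnit A) (hD : IsUnit D) :
    IsUnit (fromBlocks A 0 C D) := by
  have := hA.invertible
  have := hD.invertible
  refine ⟨⟨fromBlocks A 0 C D, fromBlocks (⅟A) 0 (-(⅟D * C * ⅟A)) (⅟D), ?_, ?_⟩, rfl⟩ <;>
    simp [fromBlocks_multiply, ← Matrix.mul_assoc, Matrix.invOf_mul_cancel_right,
      ← fromBlocks_one]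

variable [Invertible D]

theorem schur_mul_toBlocks₁₁_eq_one {N : Matrix (m ⊕ n) (m ⊕ n) α}
    (h : fromBlocks A B C D * N = 1) : (A - B * ⅟D * C) * N.toBlocks₁₁ = 1 := by
  rw [← fromBlocks_toBlocks N, fromBlocks_multiply, ← fromBlocks_one, fromBlocks_inj] at h
  obtain ⟨h₁₁, -, h₂₁, -⟩ := h
  have h₂₁' : N.toBlocks₂₁ = -(⅟D * C * N.toBlocks₁₁) := by
    rw [eq_neg_iff_add_eq_zero, add_comm]
    simpa [Matrix.mul_add, ← Matrix.mul_assoc] using congrArg (⅟D * ·) h₂₁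
  rw [← h₁₁, h₂₁', Matrix.sub_mul, Matrix.mul_neg, sub_eq_add_neg]
  simp only [Matrix.mul_assoc]

theorem toBlocks₁₁_mul_schur_eq_one {N : Matrix (m ⊕ n) (m ⊕ n) α}
    (h : N * fromBlocks A B C D = 1) : N.toBlocks₁₁ * (A - B * ⅟D * C) = 1 := by
  rw [← fromBlocks_toBlocks N, fromBlocks_multiply, ← fromBlocks_one, fromBlocks_inj] at h
  obtain ⟨h₁₁, h₁₂, -, -⟩ := h
  have h₁₂' : N.toBlocks₁₂ = -(N.toBlocks₁₁ * B * ⅟D) := by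
    rw [eq_neg_iff_add_eq_zero, add_comm]
    simpa [Matrix.add_mul, Matrix.mul_assoc] using congrArg (· * ⅟D) h₁₂
  rw [← h₁₁, h₁₂', Matrix.mul_sub, Matrix.neg_mul, sub_eq_add_neg]
  simp only [Matrix.mul_assoc]

theorem fromBlocks_eq_ldu_of_invertible₂₂ :
    fromBlocks A B C D =
      fromBlocks 1 (B * ⅟D) 0 1 * fromBlocks (A - B * ⅟D * C) 0 0 D *
        fromBlocks 1 0 (⅟D * C) 1 := by
  simp only [fromBlocks_multiply, Matrix.mul_zero, Matrix.zero_mul, add_zero, zero_add,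
    Matrix.one_mul, Matrix.mul_one, Matrix.mul_invOf_cancel_left, Matrix.mul_assoc,
    sub_add_cancel, invOf_mul_self]

theorem isUnit_fromBlocks_iff_isUnit_schur :
    IsUnit (fromBlocks A B C D) ↔ IsUnit (A - B * ⅟D * C) := by
  refine ⟨fun ⟨u, hu⟩ => ?_, fun hS => ?_⟩
  · exact ⟨⟨_, _, schur_mul_toBlocks₁₁_eq_one (hu ▸ u.mul_inv),
      toBlocks₁₁_mul_schur_eq_one (hu ▸ u.inv_mul)⟩, rfl⟩
  · rw [fromBlocks_eq_ldu_of_invertible₂₂]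
    exact ((isUnit_fromBlocks_zero₂₁_of_isUnit isUnit_one isUnit_one).mul
      (isUnit_fromBlocks_zero₂₁_of_isUnit hS (isUnit_of_invertible D))).mul
      (isUnit_fromBlocks_zero₁₂_of_isUnit isUnit_one isUnit_one)

theorem toBlocks₁₁_ringInverse_fromBlocks :
    (Ring.inverse (fromBlocks A B C D)).toBlocks₁₁ = Ring.inverse (A - B * ⅟D * C) := by
  by_cases h : IsUnit (fromBlocks A B C D)
  · exact (Ring.inverse_unit ⟨_, _, schur_mul_toBlocks₁₁_eq_one (Ring.mul_inverse_cancel _ h),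
      toBlocks₁₁_mul_schur_eq_one (Ring.inverse_mul_cancel _ h)⟩).symm
  · rw [Ring.inverse_non_unit _ h,
      Ring.inverse_non_unit _ (isUnit_fromBlocks_iff_isUnit_schur.not.mp h)]
    rfl

end SchurComplement

section BorderedMatrix

variable {α : Type*} {n : ℕ}

def finSuccSumEquiv (n : ℕ) : Unit ⊕ Fin n ≃ Fin (n + 1) :=
  (Equiv.sumComm _ _).trans <|
    (Equiv.optionEquivSumPUnit (Fin n)).symm.trans (finSuccEquiv n).symm

theorem submatrix_finSuccSumEquiv (M : Matrix (Fin (n + 1)) (Fin (n + 1)) α) :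
    M.submatrix (finSuccSumEquiv n) (finSuccSumEquiv n) =
      fromBlocks (of fun _ _ => M 0 0) (of fun _ j => M 0 j.succ) (of fun i _ => M i.succ 0)
        (M.submatrix Fin.succ Fin.succ) := by
  ext (_ | i) (_ | j) <;> rfl

variable [Ring α] (M : Matrix (Fin (n + 1)) (Fin (n + 1)) α)
  [Invertible (M.submatrix Fin.succ Fin.succ)]

theorem uniqueRingEquiv_schur_succ :
    uniqueRingEquiv ((of fun _ _ => M 0 0 : Matrix Unit Unit α) -
        (of fun _ j => M 0 j.succ : Matrix Unit (Fin n) α) * ⅟(M.submatrix Fin.succ Fin.succ) *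
          (of fun i _ => M i.succ 0 : Matrix (Fin n) Unit α)) =
      M 0 0 - ∑ i, ∑ j, M 0 i.succ * ⅟(M.submatrix Fin.succ Fin.succ) i j * M j.succ 0 := by
  simp only [uniqueRingEquiv_apply, PUnit.default_eq_unit, Matrix.sub_apply, of_apply,
    Matrix.mul_apply, Finset.sum_mul, sub_right_inj]
  exact Finset.sum_comm

theorem isUnit_iff_isUnit_schur_succ :
    IsUnit M ↔ IsUnit (M 0 0 -
      ∑ i, ∑ j, M 0 i.succ * ⅟(M.submatrix Fin.succ Fin.succ) i j * M j.succ 0) := by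
  rw [← isUnit_map_iff (reindexRingEquiv α (finSuccSumEquiv n).symm), coe_reindexRingEquiv,
    reindex_apply, Equiv.symm_symm, submatrix_finSuccSumEquiv,
    isUnit_fromBlocks_iff_isUnit_schur, ← isUnit_map_iff uniqueRingEquiv,
    uniqueRingEquiv_schur_succ]

theorem ringInverse_apply_zero_zero :
    Ring.inverse M 0 0 = Ring.inverse (M 0 0 -
      ∑ i, ∑ j, M 0 i.succ * ⅟(M.submatrix Fin.succ Fin.succ) i j * M j.succ 0) := by
  let e := reindexRingEquiv α (finSuccSumEquiv n).symm
  calc Ring.inverse M 0 0 = e (Ring.inverse M) (.inl ()) (.inl ()) := rfl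
    _ = (Ring.inverse (e M)).toBlocks₁₁ () () := by rw [map_ringInverse]; rfl
    _ = _ := by
      rw [coe_reindexRingEquiv, reindex_apply, Equiv.symm_symm, submatrix_finSuccSumEquiv,
        toBlocks₁₁_ringInverse_fromBlocks, ← uniqueRingEquiv_schur_succ, ← map_ringInverse]
      rfl

end BorderedMatrix

section Linearization

variable {k n : ℕ} {P : FreeAlgebra ℂ (Fin k)}
  {L : Matrix (Fin (n + 1)) (Fin (n + 1)) (FreeAlgebra ℂ (Fin k))}
  {R : Type*} [Ring R]

theorem IsLinearization.isUnit_pencil_iff_and_inverse_zero_zero (hL : IsLinearization P L)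
    (f : FreeAlgebra ℂ (Fin k) →+* R) (w : R) :
    (IsUnit (single (0 : Fin (n + 1)) 0 w - L.map f) ↔ IsUnit (w - f P)) ∧
      Ring.inverse (single 0 0 w - L.map f : Matrix (Fin (n + 1)) (Fin (n + 1)) R) 0 0 =
        Ring.inverse (w - f P) := by
  obtain ⟨hL₀₀, -, Qi, hQ, hQ', rfl⟩ := hL
  set M := single (0 : Fin (n + 1)) 0 w - L.map f
  have hcorner : M.submatrix Fin.succ Fin.succ = -(L.submatrix Fin.succ Fin.succ).map f := by
    ext i j
    simp [M, (Fin.succ_ne_zero _).symm]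
  have hmap_one : (1 : Matrix (Fin n) (Fin n) _).map f = 1 :=
    Matrix.map_one _ (map_zero f) (map_one f)
  let : Invertible (M.submatrix Fin.succ Fin.succ) :=
    { invOf := -Qi.map f
      invOf_mul_self := by rw [hcorner, neg_mul_neg, ← Matrix.map_mul, hQ', hmap_one]
      mul_invOf_self := by rw [hcorner, neg_mul_neg, ← Matrix.map_mul, hQ, hmap_one] }
  have hschur :
      M 0 0 - ∑ i, ∑ j, M 0 i.succ * ⅟(M.submatrix Fin.succ Fin.succ) i j * M j.succ 0 =
        w - f (-∑ i, ∑ j, L 0 i.succ * Qi i j * L j.succ 0) := by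
    rw [show ⅟(M.submatrix Fin.succ Fin.succ) = -Qi.map f from rfl]
    simp [M, hL₀₀, map_sum, (Fin.succ_ne_zero _).symm]
  rw [← hschur]
  exact ⟨isUnit_iff_isUnit_schur_succ M, ringInverse_apply_zero_zero M⟩

end Linearization

theorem linearization_invertibility_general
    {k n : ℕ} (P : FreeAlgebra ℂ (Fin k))
    (L : Matrix (Fin (n+1)) (Fin (n+1)) (FreeAlgebra ℂ (Fin k)))
    (hL : IsLinearization P L)
    {𝒜 : Type*} [NormedRing 𝒜] [NormedAlgebra ℂ 𝒜]
    (y : Fin k → 𝒜) (z : ℂ) :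
    (IsUnit (Matrix.single (0 : Fin (n+1)) (0 : Fin (n+1)) (algebraMap ℂ 𝒜 z)
        - L.map (fun p => evalPoly p y)) ↔
      IsUnit (algebraMap ℂ 𝒜 z - evalPoly P y)) ∧
    (IsUnit (algebraMap ℂ 𝒜 z - evalPoly P y) →
      Ring.inverse (Matrix.single (0 : Fin (n+1)) (0 : Fin (n+1)) (algebraMap ℂ 𝒜 z)
          - L.map (fun p => evalPoly p y)) 0 0
        = Ring.inverse (algebraMap ℂ 𝒜 z - evalPoly P y)) :=
  have h := hL.isUnit_pencil_iff_and_inverse_zero_zero (FreeAlgebra.lift ℂ y).toRingHom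
    (algebraMap ℂ 𝒜 z)
  ⟨h.1, fun _ => h.2⟩

/-- Lemma "inversible": `z e₁₁ ⊗ 1 - L_P(y)` is invertible iff `z·1 - P(y)` is,
and in that case the `(1,1)` entry of the inverse is `(z·1 - P(y))⁻¹`. -/
theorem linearization_invertibility
    {k n : ℕ} (P : FreeAlgebra ℂ (Fin k))
    (L : Matrix (Fin (n+1)) (Fin (n+1)) (FreeAlgebra ℂ (Fin k)))
    (hL : IsLinearization P L)
    {𝒜 : Type*} [NormedRing 𝒜] [StarRing 𝒜] [CStarRing 𝒜] [NormedAlgebra ℂ 𝒜]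
    [StarModule ℂ 𝒜] [CompleteSpace 𝒜]
    (y : Fin k → 𝒜) (z : ℂ) :
    (IsUnit (Matrix.single (0 : Fin (n+1)) (0 : Fin (n+1)) (algebraMap ℂ 𝒜 z)
        - L.map (fun p => evalPoly p y)) ↔
      IsUnit (algebraMap ℂ 𝒜 z - evalPoly P y)) ∧
    (IsUnit (algebraMap ℂ 𝒜 z - evalPoly P y) →
      Ring.inverse (Matrix.single (0 : Fin (n+1)) (0 : Fin (n+1)) (algebraMap ℂ 𝒜 z)
          - L.map (fun p => evalPoly p y)) 0 0
        = Ring.inverse (algebraMap ℂ 𝒜 z - evalPoly P y)) :=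
  linearization_invertibility_general P L hL y z

end NCOutliers
end
end

section
/- Let P ∈ ℂ⟨X_1,…,X_k⟩ and let L_P ∈ M_m(ℂ⟨X_1,…,X_k⟩) be a linearization of P. There exist two polynomials T_1 and T_2 in k commuting indeterminates, with nonnegative coefficients, depending only on L_P, such that for every k-tuple y = (y_1,…,y_k) of elements of a unital C*-algebra 𝒜 and every z ∈ ℂ such that z·1_𝒜 − P(y) is invertible, one has ‖(z·e_{11}⊗1_𝒜 − L_P(y))^{-1}‖ ≤ T_1(‖y_1‖,…,‖y_k‖)·‖(z·1_𝒜 − P(y))^{-1}‖ + T_2(‖y_1‖,…,‖y_k‖), where e_{11} is the m×m matrix unit with 1 in position (1,1). -/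
/-!
Reindex `Fin (n+1)` as `Fin n ⊕ Unit`, so that `z e₁₁ - L_P(y)` becomes a block matrix whose
top-left block `-Q(y)` is invertible with inverse `-Q⁻¹(y)`. Because `P = -u* Q⁻¹ v`, the Schur
complement of that block is the `1 × 1` matrix `z - P(y)`, so the block-inverse formula writes
`(z e₁₁ - L_P(y))⁻¹` through `Q⁻¹(y)`, `u(y)`, `v(y)` and `(z - P(y))⁻¹`, affinely in the last.
Each entry of `Q⁻¹(y)` and `L_P(y)` is a fixed noncommutative polynomial in `y`, whose norm is
dominated by a commutative polynomial with nonnegative coefficients in the `‖yᵢ‖`.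
-/

open scoped BigOperators Kronecker
open MeasureTheory ProbabilityTheory Filter Matrix
open scoped ComplexOrder

noncomputable section

namespace MvPolynomial

variable (σ R : Type*) [CommSemiring R] [PartialOrder R] [IsOrderedRing R]

def nonnegCoeffs : Subsemiring (MvPolynomial σ R) where
  carrier := {T | ∀ d, 0 ≤ T.coeff d}
  zero_mem' d := by simp
  one_mem' d := by
    classical
    rw [coeff_one]
    split_ifs <;> simp
  add_mem' hS hT d := by
    rw [coeff_add]
    exact add_nonneg (hS d) (hT d)
  mul_mem' hS hT d := by
    classical
    rw [coeff_mul]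
    exact Finset.sum_nonneg fun p _ => mul_nonneg (hS _) (hT _)

variable {σ R}

theorem C_mem_nonnegCoeffs {r : R} (hr : 0 ≤ r) : C r ∈ nonnegCoeffs σ R := fun d => by
  classical
  rw [coeff_C]
  split_ifs <;> simp [hr]

theorem X_mem_nonnegCoeffs (i : σ) : X i ∈ nonnegCoeffs σ R := fun d => by
  classical
  rw [coeff_X]
  split_ifs <;> simp

theorem eval_nonneg_of_mem_nonnegCoeffs {T : MvPolynomial σ R} (hT : T ∈ nonnegCoeffs σ R)
    {x : σ → R} (hx : 0 ≤ x) : 0 ≤ eval x T := by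
  rw [eval_eq]
  exact Finset.sum_nonneg fun d _ =>
    mul_nonneg (hT d) (Finset.prod_nonneg fun i _ => pow_nonneg (hx i) _)

end MvPolynomial

theorem CStarRing.norm_one_le (A : Type*) [NormedRing A] [StarRing A] [CStarRing A] :
    ‖(1 : A)‖ ≤ 1 := by
  rcases subsingleton_or_nontrivial A with hA | hA
  · simp [Subsingleton.elim (1 : A) 0]
  · exact CStarRing.norm_one.le

theorem RingEquiv.map_ringInverse {R S : Type*} [Semiring R] [Semiring S] (f : R ≃+* S)
    (x : R) : f (Ring.inverse x) = Ring.inverse (f x) := by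
  by_cases hx : IsUnit x
  · obtain ⟨u, rfl⟩ := hx
    have h := Ring.inverse_unit (Units.map (f : R →* S) u)
    simp only [Units.coe_map, Units.coe_map_inv, MonoidHom.coe_coe] at h
    rw [Ring.inverse_unit, h]
  · rw [Ring.inverse_non_unit _ hx, Ring.inverse_non_unit _ (by rwa [isUnit_map_iff]), map_zero]

theorem Fintype.sum_comp_le_of_injective {ι κ M : Type*} [Fintype ι] [Fintype κ]
    [AddCommMonoid M] [Preorder M] [AddLeftMono M] {h : ι → κ} (hh : h.Injective) (F : κ → M)
    (hF : ∀ x, 0 ≤ F x) : ∑ i, F (h i) ≤ ∑ x, F x :=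
  (Finset.sum_map Finset.univ ⟨h, hh⟩ F).symm.le.trans (Finset.sum_le_univ_sum_of_nonneg hF)

def finSuccEquivSumUnit (n : ℕ) : Fin n ⊕ Unit ≃ Fin (n + 1) :=
  ((finSuccEquiv n).trans (Equiv.optionEquivSumPUnit.{0} (Fin n))).symm

@[simp]
theorem finSuccEquivSumUnit_inl {n : ℕ} (i : Fin n) : finSuccEquivSumUnit n (.inl i) = i.succ :=
  rfl

@[simp]
theorem finSuccEquivSumUnit_inr {n : ℕ} (u : Unit) : finSuccEquivSumUnit n (.inr u) = 0 :=
  rfl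

namespace Matrix

section EntryNormSum

variable {l m n o α : Type*} [Fintype l] [Fintype m] [Fintype n] [Fintype o]

/-- On square matrices this is `NCOutliers.matSumNorm`, definitionally. -/
def entryNormSum [Norm α] (M : Matrix m n α) : ℝ :=
  ∑ i, ∑ j, ‖M i j‖

section SeminormedAddCommGroup

variable [SeminormedAddCommGroup α]

theorem entryNormSum_nonneg (M : Matrix m n α) : 0 ≤ entryNormSum M :=
  Finset.sum_nonneg fun _ _ => Finset.sum_nonneg fun _ _ => norm_nonneg _

@[simp]
theorem entryNormSum_neg (M : Matrix m n α) : entryNormSum (-M) = entryNormSum M := by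
  simp [entryNormSum]

theorem entryNormSum_add_le (M N : Matrix m n α) :
    entryNormSum (M + N) ≤ entryNormSum M + entryNormSum N := by
  simp only [entryNormSum, ← Finset.sum_add_distrib]
  exact Finset.sum_le_sum fun i _ => Finset.sum_le_sum fun j _ => norm_add_le _ _

theorem entryNormSum_fromBlocks (A : Matrix n l α) (B : Matrix n m α) (C : Matrix o l α)
    (D : Matrix o m α) :
    entryNormSum (fromBlocks A B C D) =
      entryNormSum A + entryNormSum B + entryNormSum C + entryNormSum D := by
  simp only [entryNormSum, Fintype.sum_sum_type, fromBlocks_apply₁₁, fromBlocks_apply₁₂,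
    fromBlocks_apply₂₁, fromBlocks_apply₂₂, Finset.sum_add_distrib]
  ring

theorem entryNormSum_submatrix_le (M : Matrix m n α) {f : l → m} {g : o → n}
    (hf : f.Injective) (hg : g.Injective) :
    entryNormSum (M.submatrix f g) ≤ entryNormSum M := by
  calc ∑ i, ∑ j, ‖M (f i) (g j)‖ ≤ ∑ i, ∑ j, ‖M (f i) j‖ := by
        gcongr with i
        exact Fintype.sum_comp_le_of_injective hg _ fun _ => norm_nonneg _
    _ ≤ ∑ i, ∑ j, ‖M i j‖ :=
        Fintype.sum_comp_le_of_injective hf _ fun _ => Finset.sum_nonneg fun _ _ => norm_nonneg _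

@[simp]
theorem entryNormSum_of_unique [Unique m] [Unique n] (M : Matrix m n α) :
    entryNormSum M = ‖M default default‖ := by
  simp [entryNormSum]

end SeminormedAddCommGroup

variable [NonUnitalSeminormedRing α]

theorem entryNormSum_mul_le (M : Matrix m n α) (N : Matrix n o α) :
    entryNormSum (M * N) ≤ entryNormSum M * entryNormSum N := by
  unfold entryNormSum
  have row_le (k : n) : ∑ j, ‖N k j‖ ≤ ∑ k, ∑ j, ‖N k j‖ :=
    Finset.single_le_sum (f := fun k => ∑ j, ‖N k j‖)
      (fun _ _ => Finset.sum_nonneg fun _ _ => norm_nonneg _) (Finset.mem_univ k)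
  calc ∑ i, ∑ j, ‖(M * N) i j‖ ≤ ∑ i, ∑ k, ‖M i k‖ * ∑ j, ‖N k j‖ := by
        gcongr with i
        simp only [mul_apply, Finset.mul_sum]
        rw [Finset.sum_comm]
        gcongr with j
        exact (norm_sum_le _ _).trans (Finset.sum_le_sum fun k _ => norm_mul_le _ _)
    _ ≤ ∑ i, ∑ k, ‖M i k‖ * ∑ k, ∑ j, ‖N k j‖ := by gcongr with i k; exact row_le k
    _ = (∑ i, ∑ k, ‖M i k‖) * ∑ k, ∑ j, ‖N k j‖ := by simp only [Finset.sum_mul]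

theorem entryNormSum_mul_le_of_le {M : Matrix m n α} {N : Matrix n o α} {x y : ℝ}
    (hM : entryNormSum M ≤ x) (hN : entryNormSum N ≤ y) : entryNormSum (M * N) ≤ x * y :=
  (entryNormSum_mul_le M N).trans
    (mul_le_mul hM hN (entryNormSum_nonneg N) ((entryNormSum_nonneg M).trans hM))

end EntryNormSum

section Schur

variable {m n α : Type*} [Fintype m] [Fintype n]

/-- The inverse of `fromBlocks A B C D` when `A' = A⁻¹` and `r` inverts the Schur complement
`D - C * A' * B`. -/
def schurBlockInverse [Ring α] (A' : Matrix m m α) (B : Matrix m n α) (C : Matrix n m α)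
    (r : Matrix n n α) : Matrix (m ⊕ n) (m ⊕ n) α :=
  fromBlocks (A' + A' * B * r * C * A') (-(A' * B * r)) (-(r * C * A')) r

section Ring

variable [DecidableEq m] [DecidableEq n] [Ring α] {A A' : Matrix m m α} {B : Matrix m n α}
  {C : Matrix n m α} {D r : Matrix n n α}

theorem fromBlocks_mul_schurBlockInverse (hA : A * A' = 1) (hr : (D - C * A' * B) * r = 1) :
    fromBlocks A B C D * schurBlockInverse A' B C r = 1 := by
  rw [schurBlockInverse, fromBlocks_multiply, ← fromBlocks_one]
  congr 1
  · simp [Matrix.mul_add, ← Matrix.mul_assoc, hA]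
  · simp [← Matrix.mul_assoc, hA]
  · calc C * (A' + A' * B * r * C * A') + D * -(r * C * A')
          = C * A' - (D - C * A' * B) * r * (C * A') := by
          simp only [Matrix.mul_add, Matrix.sub_mul, Matrix.mul_neg, Matrix.mul_assoc]; abel
      _ = 0 := by rw [hr, Matrix.one_mul, sub_self]
  · rw [← hr]
    simp only [Matrix.sub_mul, Matrix.mul_neg, Matrix.mul_assoc]; abel

theorem schurBlockInverse_mul_fromBlocks (hA : A' * A = 1) (hr : r * (D - C * A' * B) = 1) :
    schurBlockInverse A' B C r * fromBlocks A B C D = 1 := by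
  rw [schurBlockInverse, fromBlocks_multiply, ← fromBlocks_one]
  congr 1
  · simp [Matrix.add_mul, Matrix.mul_assoc, hA]
  · calc (A' + A' * B * r * C * A') * B + -(A' * B * r) * D
          = A' * B - A' * B * (r * (D - C * A' * B)) := by
          simp only [Matrix.add_mul, Matrix.mul_sub, Matrix.neg_mul, Matrix.mul_assoc]; abel
      _ = 0 := by rw [hr, Matrix.mul_one, sub_self]
  · simp [Matrix.mul_assoc, hA]
  · rw [← hr]
    simp only [Matrix.mul_sub, Matrix.neg_mul, Matrix.mul_assoc]; abel

theorem ringInverse_fromBlocks (hA : A * A' = 1) (hA' : A' * A = 1)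
    (hr : (D - C * A' * B) * r = 1) (hr' : r * (D - C * A' * B) = 1) :
    Ring.inverse (fromBlocks A B C D) = schurBlockInverse A' B C r :=
  Ring.inverse_unit ⟨_, _, fromBlocks_mul_schurBlockInverse hA hr,
    schurBlockInverse_mul_fromBlocks hA' hr'⟩

end Ring

theorem entryNormSum_schurBlockInverse_le [NormedRing α] (A' : Matrix m m α) (B : Matrix m n α)
    (C : Matrix n m α) (r : Matrix n n α) :
    entryNormSum (schurBlockInverse A' B C r) ≤
      entryNormSum A' + entryNormSum r * (1 + entryNormSum A' * entryNormSum B) *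
        (1 + entryNormSum C * entryNormSum A') := by
  set a := entryNormSum A'
  set b := entryNormSum B
  set c := entryNormSum C
  set ρ := entryNormSum r
  have h₁₁ : entryNormSum (A' + A' * B * r * C * A') ≤ a + a * b * ρ * c * a :=
    (entryNormSum_add_le _ _).trans <| add_le_add le_rfl <|
      entryNormSum_mul_le_of_le (entryNormSum_mul_le_of_le (entryNormSum_mul_le_of_le
        (entryNormSum_mul_le_of_le le_rfl le_rfl) le_rfl) le_rfl) le_rfl
  have h₁₂ : entryNormSum (A' * B * r) ≤ a * b * ρ :=
    entryNormSum_mul_le_of_le (entryNormSum_mul_le_of_le le_rfl le_rfl) le_rfl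
  have h₂₁ : entryNormSum (r * C * A') ≤ ρ * c * a :=
    entryNormSum_mul_le_of_le (entryNormSum_mul_le_of_le le_rfl le_rfl) le_rfl
  rw [schurBlockInverse, entryNormSum_fromBlocks, entryNormSum_neg, entryNormSum_neg]
  linarith

end Schur

section CornerPencil

variable {n : ℕ} {α : Type*}

theorem submatrix_single_zero_sub_eq_fromBlocks [Ring α]
    (K : Matrix (Fin (n + 1)) (Fin (n + 1)) α) (hK : K 0 0 = 0) (s : α) :
    (single 0 0 s - K).submatrix (finSuccEquivSumUnit n) (finSuccEquivSumUnit n) =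
      fromBlocks (-K.submatrix Fin.succ Fin.succ) (-K.submatrix Fin.succ fun _ => 0)
        (-K.submatrix (fun _ => 0) Fin.succ) (of fun _ _ => s) := by
  ext (i | i) (j | j) <;> simp [hK, (Fin.succ_ne_zero _).symm]

theorem entryNormSum_ringInverse_single_zero_sub_le [NormedRing α]
    (K : Matrix (Fin (n + 1)) (Fin (n + 1)) α) (hK : K 0 0 = 0) (Q' : Matrix (Fin n) (Fin n) α)
    (hQ : K.submatrix Fin.succ Fin.succ * Q' = 1) (hQ' : Q' * K.submatrix Fin.succ Fin.succ = 1)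
    (s ρ : α) (hρ : (s + ∑ i, ∑ j, K 0 i.succ * Q' i j * K j.succ 0) * ρ = 1)
    (hρ' : ρ * (s + ∑ i, ∑ j, K 0 i.succ * Q' i j * K j.succ 0) = 1) :
    entryNormSum (Ring.inverse (single 0 0 s - K)) ≤
      entryNormSum Q' + ‖ρ‖ * (1 + entryNormSum Q' * entryNormSum K) ^ 2 := by
  set u : Matrix Unit (Fin n) α := K.submatrix (fun _ => 0) Fin.succ
  set v : Matrix (Fin n) Unit α := K.submatrix Fin.succ fun _ => 0
  set σ := s + ∑ i, ∑ j, K 0 i.succ * Q' i j * K j.succ 0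
  have hSchur : of (fun _ _ => s) - (-u) * (-Q') * (-v) = of fun _ _ => σ := by
    ext
    simp only [Matrix.mul_neg, Matrix.neg_mul, neg_neg, sub_apply, of_apply, neg_apply,
      mul_apply, submatrix_apply, Finset.sum_mul, mul_assoc, sub_neg_eq_add, add_right_inj, u, v,
      σ]
    exact Finset.sum_comm
  have hblocks : single 0 0 s - K = reindex (finSuccEquivSumUnit n) (finSuccEquivSumUnit n)
      (fromBlocks (-K.submatrix Fin.succ Fin.succ) (-v) (-u) (of fun _ _ => s)) := by
    rw [← submatrix_single_zero_sub_eq_fromBlocks K hK s, reindex_apply, submatrix_submatrix]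
    simp
  have hinv : Ring.inverse (fromBlocks (-K.submatrix Fin.succ Fin.succ) (-v) (-u)
      (of fun _ _ => s)) = schurBlockInverse (-Q') (-v) (-u) (of fun _ _ => ρ) :=
    ringInverse_fromBlocks (by rwa [neg_mul_neg]) (by rwa [neg_mul_neg])
      (by rw [hSchur]; ext; simp [mul_apply, hρ]) (by rw [hSchur]; ext; simp [mul_apply, hρ'])
  rw [hblocks, ← coe_reindexRingEquiv, ← RingEquiv.map_ringInverse, coe_reindexRingEquiv,
    reindex_apply, hinv]
  have hu : entryNormSum u ≤ entryNormSum K :=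
    entryNormSum_submatrix_le K (Function.injective_of_subsingleton _) (Fin.succ_injective n)
  have hv : entryNormSum v ≤ entryNormSum K :=
    entryNormSum_submatrix_le K (Fin.succ_injective n) (Function.injective_of_subsingleton _)
  have hQ'0 := entryNormSum_nonneg Q'
  calc _ ≤ entryNormSum (schurBlockInverse (-Q') (-v) (-u) (of fun _ _ => ρ)) :=
        entryNormSum_submatrix_le _ (Equiv.injective _) (Equiv.injective _)
    _ ≤ _ := entryNormSum_schurBlockInverse_le ..
    _ ≤ entryNormSum Q' + ‖ρ‖ * (1 + entryNormSum Q' * entryNormSum K) *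
          (1 + entryNormSum K * entryNormSum Q') := by
      simp only [entryNormSum_neg, entryNormSum_of_unique, of_apply]
      gcongr
      · exact add_nonneg zero_le_one (mul_nonneg (entryNormSum_nonneg u) hQ'0)
      · exact mul_nonneg (norm_nonneg ρ) (add_nonneg zero_le_one
          (mul_nonneg hQ'0 (entryNormSum_nonneg K)))
    _ = _ := by ring

end CornerPencil

end Matrix

namespace NCOutliers

variable {k : ℕ}

/-- `‖1‖ ≤ 1` rather than `NormOneClass`, so that the zero `C*`-algebra is covered. -/
def IsNormMajorant (T : MvPolynomial (Fin k) ℝ) (p : FreeAlgebra ℂ (Fin k)) : Prop :=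
  T ∈ MvPolynomial.nonnegCoeffs (Fin k) ℝ ∧
    ∀ (A : Type*) [NormedRing A] [NormedAlgebra ℂ A], ‖(1 : A)‖ ≤ 1 →
      ∀ y : Fin k → A, ‖evalPoly p y‖ ≤ MvPolynomial.eval (fun i => ‖y i‖) T

theorem exists_isNormMajorant (p : FreeAlgebra ℂ (Fin k)) : ∃ T, IsNormMajorant T p := by
  induction p using FreeAlgebra.induction with
  | grade0 r =>
    refine ⟨MvPolynomial.C ‖r‖, MvPolynomial.C_mem_nonnegCoeffs (norm_nonneg r),
      fun A _ _ h1 y => ?_⟩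
    rw [evalPoly, AlgHom.commutes, norm_algebraMap, MvPolynomial.eval_C]
    exact mul_le_of_le_one_right (norm_nonneg r) h1
  | grade1 i =>
    exact ⟨MvPolynomial.X i, MvPolynomial.X_mem_nonnegCoeffs i, fun A _ _ _ y => by
      simp [evalPoly]⟩
  | mul p q hp hq =>
    obtain ⟨Tp, hTp, hp⟩ := hp
    obtain ⟨Tq, hTq, hq⟩ := hq
    refine ⟨Tp * Tq, mul_mem hTp hTq, fun A _ _ h1 y => ?_⟩
    rw [evalPoly, map_mul, map_mul]
    exact (norm_mul_le _ _).trans <| mul_le_mul (hp A h1 y) (hq A h1 y) (norm_nonneg _) <|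
      MvPolynomial.eval_nonneg_of_mem_nonnegCoeffs hTp fun i => norm_nonneg (y i)
  | add p q hp hq =>
    obtain ⟨Tp, hTp, hp⟩ := hp
    obtain ⟨Tq, hTq, hq⟩ := hq
    refine ⟨Tp + Tq, add_mem hTp hTq, fun A _ _ h1 y => ?_⟩
    rw [evalPoly, map_add, map_add]
    exact (norm_add_le _ _).trans (add_le_add (hp A h1 y) (hq A h1 y))

theorem exists_entryNormSum_map_evalPoly_le {m n : Type*} [Fintype m] [Fintype n]
    (M : Matrix m n (FreeAlgebra ℂ (Fin k))) :
    ∃ T ∈ MvPolynomial.nonnegCoeffs (Fin k) ℝ,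
      ∀ (A : Type*) [NormedRing A] [NormedAlgebra ℂ A], ‖(1 : A)‖ ≤ 1 →
        ∀ y : Fin k → A,
          (M.map (evalPoly · y)).entryNormSum ≤ MvPolynomial.eval (fun i => ‖y i‖) T := by
  choose T hT using fun i j => exists_isNormMajorant (M i j)
  refine ⟨∑ i, ∑ j, T i j, sum_mem fun i _ => sum_mem fun j _ => (hT i j).1,
    fun A _ _ h1 y => ?_⟩
  simp only [entryNormSum, map_apply, map_sum]
  gcongr with i _ j _
  exact (hT i j).2 A h1 y

theorem entryNormSum_ringInverse_linearization_le {n : ℕ} {A : Type*} [NormedRing A]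
    [Algebra ℂ A] {P : FreeAlgebra ℂ (Fin k)}
    {L : Matrix (Fin (n + 1)) (Fin (n + 1)) (FreeAlgebra ℂ (Fin k))} (hL00 : L 0 0 = 0)
    {Qi : Matrix (Fin n) (Fin n) (FreeAlgebra ℂ (Fin k))}
    (hQ : L.submatrix Fin.succ Fin.succ * Qi = 1) (hQ' : Qi * L.submatrix Fin.succ Fin.succ = 1)
    (hP : P = -∑ i, ∑ j, L 0 i.succ * Qi i j * L j.succ 0) (y : Fin k → A) {z : ℂ}
    (hz : IsUnit (algebraMap ℂ A z - evalPoly P y)) :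
    entryNormSum (Ring.inverse (single 0 0 (algebraMap ℂ A z) - L.map (evalPoly · y))) ≤
      entryNormSum (Qi.map (evalPoly · y)) +
        ‖Ring.inverse (algebraMap ℂ A z - evalPoly P y)‖ *
          (1 + entryNormSum (Qi.map (evalPoly · y)) * entryNormSum (L.map (evalPoly · y))) ^ 2 := by
  have hSchur : algebraMap ℂ A z - evalPoly P y = algebraMap ℂ A z + ∑ i, ∑ j,
      evalPoly (L 0 i.succ) y * evalPoly (Qi i j) y * evalPoly (L j.succ 0) y := by
    simp [hP, evalPoly, map_sum]
  have hQy := congrArg (FreeAlgebra.lift ℂ y).mapMatrix hQ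
  have hQy' := congrArg (FreeAlgebra.lift ℂ y).mapMatrix hQ'
  rw [map_mul, map_one] at hQy hQy'
  exact entryNormSum_ringInverse_single_zero_sub_le _ (by simp [hL00, evalPoly]) _ hQy hQy' _ _
    (hSchur ▸ Ring.mul_inverse_cancel _ hz) (hSchur ▸ Ring.inverse_mul_cancel _ hz)

/-- Lemma "resHari": there are polynomials `T₁, T₂` with nonnegative
coefficients, depending only on `L_P`, bounding the norm of the resolvent of the linearization
in terms of the resolvent of `P`. -/
theorem resolvent_bound_for_linearization
    {k n : ℕ} (P : FreeAlgebra ℂ (Fin k))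
    (L : Matrix (Fin (n+1)) (Fin (n+1)) (FreeAlgebra ℂ (Fin k)))
    (hL : IsLinearization P L) :
    ∃ T1 T2 : MvPolynomial (Fin k) ℝ,
      (∀ d : Fin k →₀ ℕ, 0 ≤ MvPolynomial.coeff d T1) ∧
      (∀ d : Fin k →₀ ℕ, 0 ≤ MvPolynomial.coeff d T2) ∧
      ∀ (𝒜 : Type) [NormedRing 𝒜] [StarRing 𝒜] [CStarRing 𝒜] [NormedAlgebra ℂ 𝒜]
        [StarModule ℂ 𝒜] [CompleteSpace 𝒜],
        ∀ (y : Fin k → 𝒜) (z : ℂ),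
          IsUnit (algebraMap ℂ 𝒜 z - evalPoly P y) →
          matSumNorm (Ring.inverse
              (Matrix.single (0 : Fin (n+1)) (0 : Fin (n+1)) (algebraMap ℂ 𝒜 z)
                - L.map (fun p => evalPoly p y)))
            ≤ MvPolynomial.eval (fun i => ‖y i‖) T1 *
                ‖Ring.inverse (algebraMap ℂ 𝒜 z - evalPoly P y)‖
              + MvPolynomial.eval (fun i => ‖y i‖) T2 := by
  obtain ⟨hL00, -, Qi, hQ, hQ', hP⟩ := hL
  obtain ⟨TL, hTL, hLy⟩ := exists_entryNormSum_map_evalPoly_le L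
  obtain ⟨TQ, hTQ, hQy⟩ := exists_entryNormSum_map_evalPoly_le Qi
  refine ⟨(1 + TQ * TL) ^ 2, TQ, pow_mem (add_mem (one_mem _) (mul_mem hTQ hTL)) 2, hTQ, ?_⟩
  intro 𝒜 _ _ _ _ _ _ y z hz
  have h1 := CStarRing.norm_one_le 𝒜
  have hQb := hQy 𝒜 h1 y
  have hLb := hLy 𝒜 h1 y
  have hQ0 := entryNormSum_nonneg (Qi.map (evalPoly · y))
  have hL0 := entryNormSum_nonneg (L.map (evalPoly · y))
  calc _ ≤ _ := entryNormSum_ringInverse_linearization_le hL00 hQ hQ' hP y hz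
    _ ≤ MvPolynomial.eval (fun i => ‖y i‖) TQ +
          ‖Ring.inverse (algebraMap ℂ 𝒜 z - evalPoly P y)‖ *
            (1 + MvPolynomial.eval (fun i => ‖y i‖) TQ *
              MvPolynomial.eval (fun i => ‖y i‖) TL) ^ 2 := by
      gcongr
      exact hQ0.trans hQb
    _ = _ := by simp only [map_pow, map_add, map_one, map_mul]; ring

end NCOutliers
end
end
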